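/- Let G be the group ⟨a, b | a^k = b^{ql} = 1, b a b^{-1} = a^n⟩ with q prime, n^q ≡ 1 (mod k), n ≢ 1 (mod k), and c = gcd(n-1, k). If q ∤ j, then the centralizer of a^i b^j in G is the subgroup generated by a^i b^j, a^{k/c}, and b^q; it is abelian and has order c·l·q. -/

import Mathlib

/-!
Every element is `a ^ s * b ^ t`, and `a ^ s * b ^ t` commutes with `a ^ s' * b ^ t'` exactly when
`k ∣ (n ^ t - 1) s' - (n ^ t' - 1) s`. Since `n ^ q ≡ 1 (mod k)` and `q ∤ j`, the order of `n`
modulo any common divisor of `n ^ j - 1` and `k` divides `gcd(j, q) = 1`, so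
`gcd(n ^ j - 1, k) = c`. Hence the centralizer `C` of `x = a ^ i b ^ j` meets `⟨a⟩` in
`⟨a ^ (k / c)⟩`, of order `c`, and `b ^ q` is central. Bezout provides some `a ^ s b ∈ C`, so
`C ⟨a⟩ = G` and `|C| = c [G : ⟨a⟩] = c q l`. Multiplying `g ∈ C` by a power `x ^ u` with
`q ∣ t + u j` and then by a power of `b ^ q` lands in `C ∩ ⟨a⟩`, so `C` is generated by the
pairwise commuting elements `x`, `a ^ (k / c)` and `b ^ q`.
-/

theorem IsOfFinOrder.orderOf_zpow {G : Type*} [Group G] {x : G} (hx : IsOfFinOrder x) (m : ℤ) :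
    orderOf (x ^ m) = orderOf x / Int.gcd m (orderOf x) := by
  obtain ⟨m, rfl | rfl⟩ := Int.eq_nat_or_neg m <;>
    simp [hx.orderOf_pow, Int.gcd_natCast_natCast, Nat.gcd_comm]

theorem Int.gcd_pow_sub_one_eq_gcd_sub_one {n k : ℤ} {q j : ℕ} (hnq : n ^ q ≡ 1 [ZMOD k])
    (hjq : j.Coprime q) : Int.gcd (n ^ j - 1) k = Int.gcd (n - 1) k := by
  refine Nat.dvd_antisymm ?_ (Int.gcd_dvd_gcd_of_dvd_left k (sub_one_dvd_pow_sub_one n j))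
  set d := Int.gcd (n ^ j - 1) k
  have hdk : (d : ℤ) ∣ k := Int.gcd_dvd_right _ _
  have hj : (n : ZMod d) ^ j = 1 := by
    exact_mod_cast (ZMod.intCast_eq_intCast_iff _ 1 d).mpr
      (Int.modEq_iff_dvd.mpr (Int.gcd_dvd_left (n ^ j - 1) k)).symm
  have hq : (n : ZMod d) ^ q = 1 := by
    exact_mod_cast (ZMod.intCast_eq_intCast_iff _ 1 d).mpr (hnq.of_dvd hdk)
  have hn : (n : ZMod d) = 1 := by
    simpa [Nat.Coprime.gcd_eq_one hjq] using pow_gcd_eq_one.mpr ⟨hj, hq⟩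
  refine Int.natCast_dvd_natCast.mp (Int.dvd_coe_gcd ?_ hdk)
  exact ((ZMod.intCast_eq_intCast_iff _ 1 d).mp (by simpa using hn)).symm.dvd

theorem Subgroup.card_eq_card_inf_mul_index {G : Type*} [Group G] {H K : Subgroup G} [K.Normal]
    (h : H ⊔ K = ⊤) : Nat.card H = Nat.card (K ⊓ H : Subgroup G) * K.index := by
  rw [← relIndex_bot_left, ← relIndex_bot_left,
    ← relIndex_mul_relIndex _ _ _ bot_le inf_le_right, inf_relIndex_right,
    ← relIndex_sup_right H K, h, relIndex_top_right]

theorem Nat.Prime.exists_dvd_add_mul {q j : ℕ} (hq : q.Prime) (hj : ¬ q ∣ j) (t : ℕ) :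
    ∃ u, q ∣ t + u * j := by
  have := Fact.mk hq
  have hj0 : (j : ZMod q) ≠ 0 := by rwa [Ne, ZMod.natCast_eq_zero_iff]
  refine ⟨(-(t : ZMod q) / j).val, (ZMod.natCast_eq_zero_iff _ _).mp ?_⟩
  push_cast
  rw [ZMod.natCast_zmod_val, div_mul_cancel₀ _ hj0, add_neg_cancel]

section

open Subgroup

variable {G : Type*} [Group G] {a b : G} {n : ℤ}

theorem pow_mul_zpow_eq_of_conj (hrel : b * a * b⁻¹ = a ^ n) (t : ℕ) (s : ℤ) :
    b ^ t * a ^ s = a ^ (n ^ t * s) * b ^ t := by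
  induction t generalizing s with
  | zero => simp
  | succ t ih =>
    have hb : b * a ^ s = a ^ (n * s) * b := by
      rw [zpow_mul, ← hrel, conj_zpow, inv_mul_cancel_right]
    rw [pow_succ, mul_assoc, hb, ← mul_assoc, ih, mul_assoc, ← pow_succ, ← mul_assoc,
      ← pow_succ]

theorem zpow_mul_pow_mul_zpow_mul_pow (hrel : b * a * b⁻¹ = a ^ n) (s : ℤ) (t : ℕ) (s' : ℤ)
    (t' : ℕ) : a ^ s * b ^ t * (a ^ s' * b ^ t') = a ^ (s + n ^ t * s') * b ^ (t + t') := by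
  rw [zpow_add, pow_add, mul_assoc (a ^ s), ← mul_assoc (b ^ t), pow_mul_zpow_eq_of_conj hrel]
  group

theorem exists_zpow_mul_pow_pow_eq (hrel : b * a * b⁻¹ = a ^ n) (s : ℤ) (t u : ℕ) :
    ∃ e : ℤ, (a ^ s * b ^ t) ^ u = a ^ e * b ^ (t * u) := by
  induction u with
  | zero => exact ⟨0, by simp⟩
  | succ u ih =>
    obtain ⟨e, he⟩ := ih
    exact ⟨e + n ^ (t * u) * s, by rw [pow_succ, he, zpow_mul_pow_mul_zpow_mul_pow hrel]; rfl⟩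

theorem commute_zpow_mul_pow_iff (hrel : b * a * b⁻¹ = a ^ n)
    (s : ℤ) (t : ℕ) (s' : ℤ) (t' : ℕ) :
    Commute (a ^ s * b ^ t) (a ^ s' * b ^ t') ↔
      (orderOf a : ℤ) ∣ (n ^ t - 1) * s' - (n ^ t' - 1) * s := by
  rw [Commute, SemiconjBy, zpow_mul_pow_mul_zpow_mul_pow hrel, zpow_mul_pow_mul_zpow_mul_pow hrel,
    add_comm t', mul_left_inj, ← mul_inv_eq_one, ← zpow_sub, ← orderOf_dvd_iff_zpow_eq_one]
  ring_nf

theorem exists_eq_zpow_mul_pow [Finite G] (hrel : b * a * b⁻¹ = a ^ n)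
    (hgen : closure {a, b} = ⊤) (g : G) : ∃ (s : ℤ) (t : ℕ), g = a ^ s * b ^ t := by
  have hg : g ∈ (closure {a, b}).toSubmonoid := hgen ▸ mem_top g
  rw [closure_toSubmonoid_of_finite] at hg
  induction hg using Submonoid.closure_induction with
  | mem x hx =>
    rcases hx with rfl | rfl
    · exact ⟨1, 0, by simp⟩
    · exact ⟨0, 1, by simp⟩
  | one => exact ⟨0, 0, by simp⟩
  | mul x y _ _ hx hy =>
    obtain ⟨⟨s, t, rfl⟩, ⟨s', t', rfl⟩⟩ := And.intro hx hy
    exact ⟨_, _, zpow_mul_pow_mul_zpow_mul_pow hrel s t s' t'⟩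

theorem zpowers_normal_of_conj [Finite G] (hrel : b * a * b⁻¹ = a ^ n)
    (hgen : closure {a, b} = ⊤) : (zpowers a).Normal := by
  refine ⟨fun _ hx g => ?_⟩
  obtain ⟨z, rfl⟩ := mem_zpowers_iff.mp hx
  obtain ⟨s, t, rfl⟩ := exists_eq_zpow_mul_pow hrel hgen g
  have : a ^ s * b ^ t * a ^ z * (a ^ s * b ^ t)⁻¹ = a ^ (s + n ^ t * z - s) := by
    rw [mul_assoc _ (b ^ t), pow_mul_zpow_eq_of_conj hrel, zpow_sub, zpow_add]
    group
  rw [this]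
  exact zpow_mem_zpowers a _

theorem pow_mem_center_of_modEq (hrel : b * a * b⁻¹ = a ^ n) (hgen : closure {a, b} = ⊤)
    {t : ℕ} (ht : n ^ t ≡ 1 [ZMOD orderOf a]) : b ^ t ∈ center G := by
  rw [center_eq_iInf hgen]
  simp only [mem_iInf, Set.mem_insert_iff, Set.mem_singleton_iff,
    mem_centralizer_singleton_iff, forall_eq_or_imp, forall_eq]
  refine ⟨?_, (pow_succ b t).symm.trans (pow_succ' b t)⟩
  have := pow_mul_zpow_eq_of_conj hrel t 1
  rwa [zpow_one, mul_one, zpow_eq_zpow_iff_modEq.mpr ht, zpow_one] at this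

theorem zpow_mem_centralizer_iff [Finite G] (hrel : b * a * b⁻¹ = a ^ n) (i s : ℤ) (j : ℕ) :
    a ^ s ∈ centralizer {a ^ i * b ^ j} ↔
      ((orderOf a / Int.gcd (n ^ j - 1) (orderOf a) : ℕ) : ℤ) ∣ s := by
  rw [← (isOfFinOrder_of_finite a).orderOf_zpow, orderOf_dvd_iff_zpow_eq_one, ← zpow_mul,
    ← orderOf_dvd_iff_zpow_eq_one, mem_centralizer_singleton_iff, ← commute_iff_eq]
  simpa using commute_zpow_mul_pow_iff hrel s 0 i j

theorem zpowers_inf_centralizer [Finite G] (hrel : b * a * b⁻¹ = a ^ n) (i : ℤ) (j : ℕ) :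
    zpowers a ⊓ centralizer {a ^ i * b ^ j} =
      zpowers (a ^ (orderOf a / Int.gcd (n ^ j - 1) (orderOf a))) := by
  ext g
  simp only [mem_inf, mem_zpowers_iff]
  constructor
  · rintro ⟨⟨s, rfl⟩, hs⟩
    obtain ⟨m, rfl⟩ := (zpow_mem_centralizer_iff hrel i s j).mp hs
    exact ⟨m, by rw [← zpow_natCast, ← zpow_mul]⟩
  · rintro ⟨m, rfl⟩
    rw [← zpow_natCast, ← zpow_mul]
    exact ⟨⟨_, rfl⟩, (zpow_mem_centralizer_iff hrel i _ j).mpr (dvd_mul_right _ _)⟩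

theorem card_zpowers_inf_centralizer [Finite G] (hrel : b * a * b⁻¹ = a ^ n)
    (i : ℤ) (j : ℕ) :
    Nat.card (zpowers a ⊓ centralizer {a ^ i * b ^ j} : Subgroup G) =
      Int.gcd (n ^ j - 1) (orderOf a) := by
  have hc : Int.gcd (n ^ j - 1) (orderOf a) ∣ orderOf a :=
    Int.natCast_dvd_natCast.mp (Int.gcd_dvd_right _ _)
  rw [zpowers_inf_centralizer hrel, Nat.card_zpowers,
    orderOf_pow_orderOf_div (orderOf_pos a).ne' hc]

theorem centralizer_sup_zpowers [Finite G] (hrel : b * a * b⁻¹ = a ^ n)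
    (hgen : closure {a, b} = ⊤) (i : ℤ) (j : ℕ)
    (h : (Int.gcd (n ^ j - 1) (orderOf a) : ℤ) ∣ (n - 1) * i) :
    centralizer {a ^ i * b ^ j} ⊔ zpowers a = ⊤ := by
  obtain ⟨m, hm⟩ := h
  obtain ⟨s, hs⟩ : ∃ s : ℤ, a ^ s * b ∈ centralizer {a ^ i * b ^ j} := by
    refine ⟨Int.gcdA (n ^ j - 1) (orderOf a) * m, ?_⟩
    rw [mem_centralizer_singleton_iff, ← commute_iff_eq]
    simpa using (commute_zpow_mul_pow_iff hrel _ 1 i j).mpr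
      ⟨Int.gcdB (n ^ j - 1) (orderOf a) * m, by rw [pow_one, hm, Int.gcd_eq_gcd_ab]; ring⟩
  have ha : a ∈ centralizer {a ^ i * b ^ j} ⊔ zpowers a :=
    mem_sup_right (mem_zpowers a)
  rw [eq_top_iff, ← hgen, closure_le, Set.insert_subset_iff, Set.singleton_subset_iff]
  refine ⟨ha, ?_⟩
  simpa using mul_mem (inv_mem (zpow_mem ha s)) (mem_sup_left hs)

theorem centralizer_eq_closure [Finite G] (hrel : b * a * b⁻¹ = a ^ n)
    (hgen : closure {a, b} = ⊤) {q : ℕ} (hq : q.Prime) (hbq : b ^ q ∈ center G)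
    (i : ℤ) {j : ℕ} (hj : ¬ q ∣ j) :
    centralizer {a ^ i * b ^ j} = closure
      {a ^ i * b ^ j, a ^ (orderOf a / Int.gcd (n ^ j - 1) (orderOf a)), b ^ q} := by
  set x := a ^ i * b ^ j
  set d := orderOf a / Int.gcd (n ^ j - 1) (orderOf a)
  set S : Set G := {x, a ^ d, b ^ q}
  have hxS : x ∈ closure S := subset_closure (Set.mem_insert _ _)
  have haS : a ^ d ∈ closure S :=
    subset_closure (Set.mem_insert_of_mem _ (Set.mem_insert _ _))
  have hbS : b ^ q ∈ closure S :=
    subset_closure (Set.mem_insert_of_mem _ (Set.mem_insert_of_mem _ rfl))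
  have hbC : b ^ q ∈ centralizer {x} := center_le_centralizer _ hbq
  refine le_antisymm (fun g hg => ?_) ((closure_le _).mpr ?_)
  · obtain ⟨s, t, rfl⟩ := exists_eq_zpow_mul_pow hrel hgen g
    obtain ⟨u, w, hw⟩ := hq.exists_dvd_add_mul hj t
    obtain ⟨e, he⟩ := exists_zpow_mul_pow_pow_eq hrel i j u
    set s' := s + n ^ t * e
    have hs' : a ^ s' = a ^ s * b ^ t * x ^ u * ((b ^ q) ^ w)⁻¹ := by
      rw [he, zpow_mul_pow_mul_zpow_mul_pow hrel, mul_comm j, hw, pow_mul, mul_inv_cancel_right]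
    have hs'C : a ^ s' ∈ zpowers a ⊓ centralizer {x} := by
      refine mem_inf.mpr ⟨zpow_mem_zpowers a s', ?_⟩
      rw [hs']
      exact mul_mem (mul_mem hg (pow_mem (mem_centralizer_singleton_iff.mpr rfl) u))
        (inv_mem (pow_mem hbC w))
    have hs'S : a ^ s' ∈ closure S := by
      rw [zpowers_inf_centralizer hrel] at hs'C
      exact zpowers_le.mpr haS hs'C
    have hg : a ^ s * b ^ t = a ^ s' * (b ^ q) ^ w * (x ^ u)⁻¹ := by
      rw [hs']; group
    rw [hg]
    exact mul_mem (mul_mem hs'S (pow_mem hbS w)) (inv_mem (pow_mem hxS u))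
  · rintro _ (rfl | rfl | rfl)
    · exact mem_centralizer_singleton_iff.mpr rfl
    · rw [SetLike.mem_coe, ← zpow_natCast, zpow_mem_centralizer_iff hrel]
    · exact hbC

theorem isMulCommutative_centralizer [Finite G] (hrel : b * a * b⁻¹ = a ^ n)
    (hgen : closure {a, b} = ⊤) {q : ℕ} (hq : q.Prime) (hbq : b ^ q ∈ center G)
    (i : ℤ) {j : ℕ} (hj : ¬ q ∣ j) : IsMulCommutative (centralizer {a ^ i * b ^ j}) := by
  have had := (zpow_mem_centralizer_iff hrel i _ j).mpr dvd_rfl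
  rw [zpow_natCast, mem_centralizer_singleton_iff] at had
  have hbq' := mem_center_iff.mp hbq
  rw [centralizer_eq_closure hrel hgen hq hbq i hj]
  refine isMulCommutative_closure ?_
  rintro _ (rfl | rfl | rfl) _ (rfl | rfl | rfl)
  all_goals first | rfl | exact had | exact had.symm | exact hbq' _ | exact (hbq' _).symm

end

theorem stmt_16_general {G : Type*} [Group G] [Fintype G] (k q l : ℕ) (n : ℤ) (a b : G)
    (hq : q.Prime)
    (hnq : n ^ q ≡ 1 [ZMOD (k : ℤ)])
    (hoa : orderOf a = k)
    (hrel : b * a * b⁻¹ = a ^ n)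
    (hgen : Subgroup.closure ({a, b} : Set G) = ⊤)
    (hcard : Fintype.card G = k * q * l)
    (i : ℤ) (j : ℕ) (hj : ¬ q ∣ j) :
    Subgroup.centralizer ({a ^ i * b ^ j} : Set G)
        = Subgroup.closure
            ({a ^ i * b ^ j, a ^ (k / Int.gcd (n - 1) (k : ℤ)), b ^ q} : Set G) ∧
    (∀ x ∈ Subgroup.centralizer ({a ^ i * b ^ j} : Set G),
      ∀ y ∈ Subgroup.centralizer ({a ^ i * b ^ j} : Set G), x * y = y * x) ∧
    Nat.card (Subgroup.centralizer ({a ^ i * b ^ j} : Set G))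
        = Int.gcd (n - 1) (k : ℤ) * l * q := by
  subst hoa
  have hc : Int.gcd (n ^ j - 1) (orderOf a) = Int.gcd (n - 1) (orderOf a) :=
    Int.gcd_pow_sub_one_eq_gcd_sub_one hnq (hq.coprime_iff_not_dvd.mpr hj).symm
  have hbq := pow_mem_center_of_modEq hrel hgen hnq
  have := zpowers_normal_of_conj hrel hgen
  have := isMulCommutative_centralizer hrel hgen hq hbq i hj
  have hindex : (Subgroup.zpowers a).index = q * l := by
    have h := (Subgroup.zpowers a).card_mul_index
    rw [Nat.card_zpowers, Nat.card_eq_fintype_card, hcard, mul_assoc] at h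
    exact Nat.eq_of_mul_eq_mul_left (orderOf_pos a) h
  have hsup := centralizer_sup_zpowers hrel hgen i j (hc ▸ (Int.gcd_dvd_left _ _).mul_right i)
  refine ⟨hc ▸ centralizer_eq_closure hrel hgen hq hbq i hj,
    fun x hx y hy => setLike_mul_comm hx hy, ?_⟩
  rw [Subgroup.card_eq_card_inf_mul_index hsup, card_zpowers_inf_centralizer hrel, hc, hindex]
  ring

theorem stmt_16 {G : Type*} [Group G] [Fintype G] (k q l : ℕ) (n : ℤ) (a b : G)
    (hk : 0 < k) (hl : 0 < l) (hq : q.Prime)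
    (hnq : n ^ q ≡ 1 [ZMOD (k : ℤ)]) (hn1 : ¬ n ≡ 1 [ZMOD (k : ℤ)])
    (hoa : orderOf a = k) (hob : orderOf b = q * l)
    (hrel : b * a * b⁻¹ = a ^ n)
    (hgen : Subgroup.closure ({a, b} : Set G) = ⊤)
    (hcard : Fintype.card G = k * q * l)
    (i : ℤ) (j : ℕ) (hj : ¬ q ∣ j) :
    Subgroup.centralizer ({a ^ i * b ^ j} : Set G)
        = Subgroup.closure
            ({a ^ i * b ^ j, a ^ (k / Int.gcd (n - 1) (k : ℤ)), b ^ q} : Set G) ∧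
    (∀ x ∈ Subgroup.centralizer ({a ^ i * b ^ j} : Set G),
      ∀ y ∈ Subgroup.centralizer ({a ^ i * b ^ j} : Set G), x * y = y * x) ∧
    Nat.card (Subgroup.centralizer ({a ^ i * b ^ j} : Set G))
        = Int.gcd (n - 1) (k : ℤ) * l * q :=
  stmt_16_general k q l n a b hq hnq hoa hrel hgen hcard i j hj
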